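/- arXiv:2104.04005 — 2 statements merged into one kernel-verified Lean document; each statement's English description precedes it below -/
import Mathlib

section
/- Let W be a subspace of a finite-dimensional real inner product space and let a, b be vectors such that the orthogonal projections a' = P_{W⊥} a and b' = P_{W⊥} b onto the orthogonal complement of W are both nonzero. Then the gap between the subspaces W + span(a) and W + span(b) equals the gap between the lines spanned by a' and by b': d(W ⊔ span(a), W ⊔ span(b)) = d(span(a'), span(b')). -/
open scoped RealInnerProductSpace

/-- The orthogonal projection onto a subspace, as a continuous linear map on the
ambient space. -/
noncomputable def orthProjCLM {E : Type*} [NormedAddCommGroup E] [InnerProductSpace ℝ E]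
    [FiniteDimensional ℝ E] (U : Submodule ℝ E) : E →L[ℝ] E :=
  U.subtypeL.comp (U.orthogonalProjectionOnto)

/-- The gap metric between subspaces: the operator norm of the difference of the
orthogonal projections. -/
noncomputable def gap {E : Type*} [NormedAddCommGroup E] [InnerProductSpace ℝ E]
    [FiniteDimensional ℝ E] (U V : Submodule ℝ E) : ℝ :=
  ‖orthProjCLM U - orthProjCLM V‖

lemma orthProjCLM_apply {E : Type*} [NormedAddCommGroup E] [InnerProductSpace ℝ E]
    [FiniteDimensional ℝ E] (U : Submodule ℝ E) (x : E) :
    orthProjCLM U x = (U.orthogonalProjectionOnto x : E) := rfl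

lemma orthProjCLM_sup {E : Type*} [NormedAddCommGroup E] [InnerProductSpace ℝ E]
    [FiniteDimensional ℝ E] (U V : Submodule ℝ E) (h : V ≤ Uᗮ) :
    orthProjCLM (U ⊔ V) = orthProjCLM U + orthProjCLM V := by
  ext x
  simp only [ContinuousLinearMap.add_apply, orthProjCLM_apply]
  apply Submodule.eq_starProjection_of_mem_orthogonal
  · exact Submodule.add_mem_sup (Submodule.coe_mem _) (Submodule.coe_mem _)
  · rw [← Submodule.inf_orthogonal]
    refine Submodule.mem_inf.2 ⟨?_, ?_⟩
    · have h1 : x - (U.orthogonalProjectionOnto x : E) ∈ Uᗮ :=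
        Submodule.sub_starProjection_mem_orthogonal x
      have h2 : (V.orthogonalProjectionOnto x : E) ∈ Uᗮ := h (Submodule.coe_mem _)
      have := Uᗮ.sub_mem h1 h2
      convert this using 1; abel
    · have h1 : x - (V.orthogonalProjectionOnto x : E) ∈ Vᗮ :=
        Submodule.sub_starProjection_mem_orthogonal x
      have h2 : (U.orthogonalProjectionOnto x : E) ∈ Vᗮ := by
        have : U ≤ Vᗮ :=
          le_trans (Submodule.le_orthogonal_orthogonal U) (Submodule.orthogonal_le h)
        exact this (Submodule.coe_mem _)
      have := Vᗮ.sub_mem h1 h2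
      convert this using 1; abel

lemma sup_span_eq {E : Type*} [NormedAddCommGroup E] [InnerProductSpace ℝ E]
    [FiniteDimensional ℝ E] (W : Submodule ℝ E) (a : E) :
    W ⊔ Submodule.span ℝ {a} = W ⊔ Submodule.span ℝ {orthProjCLM Wᗮ a} := by
  have key : orthProjCLM Wᗮ a = a - (W.orthogonalProjectionOnto a : E) := by
    exact Submodule.starProjection_orthogonal_val a
  apply le_antisymm
  · refine sup_le le_sup_left ((Submodule.span_singleton_le_iff_mem _ _).2 ?_)
    exact Submodule.mem_sup.2 ⟨_, Submodule.coe_mem (W.orthogonalProjectionOnto a), _,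
      Submodule.mem_span_singleton_self (orthProjCLM Wᗮ a), by rw [key]; abel⟩
  · refine sup_le le_sup_left ((Submodule.span_singleton_le_iff_mem _ _).2 ?_)
    rw [key]
    exact Submodule.sub_mem _
      (Submodule.mem_sup_right (Submodule.mem_span_singleton_self a))
      (Submodule.mem_sup_left (Submodule.coe_mem _))

theorem gap_add_line_eq_gap_residuals {E : Type*} [NormedAddCommGroup E]
    [InnerProductSpace ℝ E] [FiniteDimensional ℝ E] (W : Submodule ℝ E) (a b : E)
    (ha : orthProjCLM Wᗮ a ≠ 0) (hb : orthProjCLM Wᗮ b ≠ 0) :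
    gap (W ⊔ Submodule.span ℝ {a}) (W ⊔ Submodule.span ℝ {b}) =
      gap (Submodule.span ℝ {orthProjCLM Wᗮ a}) (Submodule.span ℝ {orthProjCLM Wᗮ b}) := by
  have ha' : Submodule.span ℝ {orthProjCLM Wᗮ a} ≤ Wᗮ :=
    (Submodule.span_singleton_le_iff_mem _ _).2 (Submodule.coe_mem _)
  have hb' : Submodule.span ℝ {orthProjCLM Wᗮ b} ≤ Wᗮ :=
    (Submodule.span_singleton_le_iff_mem _ _).2 (Submodule.coe_mem _)
  rw [gap, sup_span_eq W a, sup_span_eq W b, orthProjCLM_sup W _ ha',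
    orthProjCLM_sup W _ hb']
  congr 1
  abel
end

section
/- Let u and v be unit vectors in a finite-dimensional real inner product space. Then the gap between the lines they span equals the sine of the angle between them: d(span(u), span(v)) = √(1 − ⟨u, v⟩²). -/
open scoped RealInnerProductSpace

lemma orthProjCLM_span_singleton {E : Type*} [NormedAddCommGroup E] [InnerProductSpace ℝ E]
    [FiniteDimensional ℝ E] (u : E) (hu : ‖u‖ = 1) (x : E) :
    orthProjCLM (Submodule.span ℝ {u}) x = ⟪u, x⟫ • u := by
  show (((ℝ ∙ u).orthogonalProjectionOnto x : E)) = ⟪u, x⟫ • u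
  rw [← Submodule.starProjection_apply, Submodule.starProjection_singleton, hu]
  norm_num

theorem gap_lines_eq_sin_angle {E : Type*} [NormedAddCommGroup E]
    [InnerProductSpace ℝ E] [FiniteDimensional ℝ E] (u v : E)
    (hu : ‖u‖ = 1) (hv : ‖v‖ = 1) :
    gap (Submodule.span ℝ {u}) (Submodule.span ℝ {v}) = Real.sqrt (1 - ⟪u, v⟫ ^ 2) := by
  set c : ℝ := ⟪u, v⟫ with hc
  set T : E →L[ℝ] E := orthProjCLM (Submodule.span ℝ {u}) - orthProjCLM (Submodule.span ℝ {v})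
    with hTdef
  have huu : ⟪u, u⟫ = (1 : ℝ) := by rw [real_inner_self_eq_norm_sq, hu]; norm_num
  have hvv : ⟪v, v⟫ = (1 : ℝ) := by rw [real_inner_self_eq_norm_sq, hv]; norm_num
  have hc2 : c ^ 2 ≤ 1 := by
    have := real_inner_mul_inner_self_le u v
    rw [huu, hvv] at this
    nlinarith [this]
  have hs2 : Real.sqrt (1 - c ^ 2) ^ 2 = 1 - c ^ 2 := Real.sq_sqrt (by linarith)
  have hT : ∀ x : E, T x = ⟪u, x⟫ • u - ⟪v, x⟫ • v := by
    intro x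
    simp [hTdef, orthProjCLM_span_singleton u hu, orthProjCLM_span_singleton v hv]
  have hnorm : ∀ x : E, ‖T x‖ ^ 2 = ⟪u, x⟫ ^ 2 + ⟪v, x⟫ ^ 2 - 2 * ⟪u, x⟫ * ⟪v, x⟫ * c := by
    intro x
    rw [hT x, norm_sub_sq_real]
    rw [norm_smul, norm_smul, real_inner_smul_left, real_inner_smul_right, hu, hv, hc]
    simp [mul_pow, Real.norm_eq_abs, sq_abs]
    ring
  apply le_antisymm
  · -- upper bound
    apply ContinuousLinearMap.opNorm_le_bound _ (Real.sqrt_nonneg _)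
    intro x
    have key : ‖T x‖ ^ 2 ≤ (1 - c ^ 2) * ‖x‖ ^ 2 := by
      by_cases h0 : ‖T x‖ = 0
      · rw [h0]
        nlinarith [sq_nonneg (‖x‖)]
      · have hK : 0 < ‖T x‖ ^ 2 := by positivity
        set a : ℝ := ⟪u, x⟫ with ha
        set b : ℝ := ⟪v, x⟫ with hb
        have cs := real_inner_mul_inner_self_le x ((a - b * c) • u + (b - a * c) • v)
        have e1 : ⟪x, (a - b * c) • u + (b - a * c) • v⟫
            = (a - b * c) * a + (b - a * c) * b := by
          rw [inner_add_right, real_inner_smul_right, real_inner_smul_right,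
            real_inner_comm u x, real_inner_comm v x]
        have e2 : ⟪(a - b * c) • u + (b - a * c) • v, (a - b * c) • u + (b - a * c) • v⟫
            = (a - b * c) ^ 2 + (b - a * c) ^ 2 + 2 * (a - b * c) * (b - a * c) * c := by
          rw [real_inner_add_add_self, real_inner_smul_left, real_inner_smul_right,
            real_inner_smul_left, real_inner_smul_left, real_inner_smul_right,
            real_inner_smul_right, huu, hvv]
          rw [← hc]
          ring
        rw [e1, e2, real_inner_self_eq_norm_sq] at cs
        have hKx : ‖T x‖ ^ 2 = a ^ 2 + b ^ 2 - 2 * a * b * c := hnorm x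
        have id1 : (a - b * c) * a + (b - a * c) * b = a ^ 2 + b ^ 2 - 2 * a * b * c := by ring
        have id2 : (a - b * c) ^ 2 + (b - a * c) ^ 2 + 2 * (a - b * c) * (b - a * c) * c
            = (1 - c ^ 2) * (a ^ 2 + b ^ 2 - 2 * a * b * c) := by ring
        rw [id1, id2, ← hKx] at cs
        nlinarith [cs, hK]
    calc ‖T x‖ = Real.sqrt (‖T x‖ ^ 2) := (Real.sqrt_sq (norm_nonneg _)).symm
      _ ≤ Real.sqrt ((1 - c ^ 2) * ‖x‖ ^ 2) := Real.sqrt_le_sqrt key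
      _ = Real.sqrt (1 - c ^ 2) * ‖x‖ := by
          rw [Real.sqrt_mul (by linarith), Real.sqrt_sq (norm_nonneg _)]
  · -- lower bound
    rcases eq_or_lt_of_le (by nlinarith [hc2] : c ≤ 1) with hc1 | hc1
    · have h0 : (1 : ℝ) - c ^ 2 = 0 := by rw [hc1]; norm_num
      rw [gap, ← hTdef, h0, Real.sqrt_zero]
      exact norm_nonneg _
    · set x : E := u - v with hx
      have hxa : ⟪u, x⟫ = 1 - c := by rw [hx, inner_sub_right, huu, ← hc]
      have hxb : ⟪v, x⟫ = c - 1 := by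
        rw [hx, inner_sub_right, hvv, real_inner_comm u v, ← hc]
      have hx2 : ‖x‖ ^ 2 = 2 - 2 * c := by
        rw [hx, norm_sub_sq_real, hu, hv, ← hc]; ring
      have hxpos : 0 < ‖x‖ := by
        have h2 : 0 < ‖x‖ ^ 2 := by rw [hx2]; linarith
        nlinarith [norm_nonneg x]
      have hTx2 : ‖T x‖ ^ 2 = (Real.sqrt (1 - c ^ 2) * ‖x‖) ^ 2 := by
        rw [mul_pow, hs2, hnorm x, hxa, hxb, hx2]; ring
      have hTx : ‖T x‖ = Real.sqrt (1 - c ^ 2) * ‖x‖ := by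
        have h3 := congrArg Real.sqrt hTx2
        rwa [Real.sqrt_sq (norm_nonneg _), Real.sqrt_sq (by positivity)] at h3
      have hle := T.le_opNorm x
      rw [hTx] at hle
      exact le_of_mul_le_mul_right hle hxpos
end
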